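/- arXiv:2310.08481 — 10 statements merged into one kernel-verified Lean document; each statement's English description precedes it below -/
import Mathlib

section
/- For all natural numbers n, m ≥ 1, ξ(n)·ξ(m) ≤ ξ(n+m−1), where ξ(n) = max{t^(n-t) : t ∈ {1,...,n}}. -/
/-- `S` is a subsemigroup of the full transformation semigroup on `X`
(maps act on the right, so the product `β·γ` is `γ ∘ β`). -/
def IsTransSub {X : Type*} (S : Set (X → X)) : Prop :=
  ∀ β ∈ S, ∀ γ ∈ S, (γ ∘ β) ∈ S

/-- `e` is a zero element of `S`: `βe = eβ = e` for all `β ∈ S`. -/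
def IsZeroElem {X : Type*} (S : Set (X → X)) (e : X → X) : Prop :=
  e ∈ S ∧ ∀ β ∈ S, e ∘ β = e ∧ β ∘ e = e

/-- `S` is nilpotent with zero `e`: some `m ≥ 1` such that every product of
`m` elements of `S` equals `e`. -/
def IsNilpotentSub {X : Type*} (S : Set (X → X)) (e : X → X) : Prop :=
  ∃ m : ℕ, 0 < m ∧ ∀ L : List (X → X), L.length = m → (∀ f ∈ L, f ∈ S) →
    L.foldr (· ∘ ·) id = e

/-- `S` is commutative. -/
def IsCommSub {X : Type*} (S : Set (X → X)) : Prop :=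
  ∀ β ∈ S, ∀ γ ∈ S, β ∘ γ = γ ∘ β

/-- `S` is a null semigroup with zero `e`: every product of two elements is `e`. -/
def IsNullSub {X : Type*} (S : Set (X → X)) (e : X → X) : Prop :=
  ∀ β ∈ S, ∀ γ ∈ S, γ ∘ β = e

/-- `ξ(n) = max { t ^ (n - t) : 1 ≤ t ≤ n }`. -/
def xi (n : ℕ) : ℕ := (Finset.Icc 1 n).sup (fun t => t ^ (n - t))

/-- `α(n) = max { t ∈ {1,…,n} : t ^ (n - t) = ξ(n) }`. -/
def alphaMax (n : ℕ) : ℕ :=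
  ((Finset.Icc 1 n).filter (fun t => t ^ (n - t) = xi n)).sup id

theorem stmt2 : ∀ n m : ℕ, 1 ≤ n → 1 ≤ m → xi n * xi m ≤ xi (n + m - 1) := by
  intro n m hn hm
  obtain ⟨t, ht, hts⟩ := Finset.exists_mem_eq_sup (Finset.Icc 1 n)
    ⟨1, by simpa using hn⟩ (fun t => t ^ (n - t))
  obtain ⟨s, hs, hss⟩ := Finset.exists_mem_eq_sup (Finset.Icc 1 m)
    ⟨1, by simpa using hm⟩ (fun t => t ^ (m - t))
  simp only [Finset.mem_Icc] at ht hs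
  set w := max t s with hw
  have hw1 : 1 ≤ w := le_trans ht.1 (le_max_left _ _)
  have hwle : w ∈ Finset.Icc 1 (n + m - 1) := by
    simp only [Finset.mem_Icc]
    exact ⟨hw1, by omega⟩
  have h1 : xi n * xi m ≤ w ^ ((n - t) + (m - s)) := by
    rw [xi, xi, hts, hss, pow_add]
    exact Nat.mul_le_mul (Nat.pow_le_pow_left (le_max_left _ _) _)
      (Nat.pow_le_pow_left (le_max_right _ _) _)
  have h2 : w ^ ((n - t) + (m - s)) ≤ w ^ (n + m - 1 - w) := by
    apply Nat.pow_le_pow_right hw1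
    omega
  calc xi n * xi m ≤ w ^ (n + m - 1 - w) := le_trans h1 h2
    _ ≤ xi (n + m - 1) := Finset.le_sup (f := fun t => t ^ (n + m - 1 - t)) hwle
end

section
/- Let X be a finite set, and let S be a nilpotent subsemigroup of T(X) with zero element e, i.e., there is m ∈ ℕ such that every product of m elements of S equals e. Then for every x in the image of e, every y in the fiber e⁻¹(x) with y ≠ x, and every β ∈ S, we have yβ ∈ e⁻¹(x) and yβ ≠ y. -/
theorem List.foldr_comp_replicate {X : Type*} (m : ℕ) (β : X → X) :
    (List.replicate m β).foldr (· ∘ ·) id = β^[m] := by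
  induction m with
  | zero => rfl
  | succ m ih => rw [List.replicate_succ, List.foldr_cons, ih, Function.iterate_succ']

theorem IsNilpotentSub.exists_iterate_eq {X : Type*} {S : Set (X → X)} {e : X → X}
    (hnil : IsNilpotentSub S e) {β : X → X} (hβ : β ∈ S) : ∃ m, β^[m] = e := by
  obtain ⟨m, -, hprod⟩ := hnil
  refine ⟨m, ?_⟩
  rw [← List.foldr_comp_replicate]
  exact hprod _ List.length_replicate fun f hf => List.eq_of_mem_replicate hf ▸ hβ

theorem IsNilpotentSub.apply_eq_self_of_isFixedPt {X : Type*} {S : Set (X → X)} {e : X → X}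
    (hnil : IsNilpotentSub S e) {β : X → X} (hβ : β ∈ S) {y : X}
    (hy : Function.IsFixedPt β y) : e y = y := by
  obtain ⟨m, hm⟩ := hnil.exists_iterate_eq hβ
  exact hm ▸ hy.iterate m

theorem IsZeroElem.apply_apply {X : Type*} {S : Set (X → X)} {e : X → X}
    (he : IsZeroElem S e) {β : X → X} (hβ : β ∈ S) (y : X) : e (β y) = e y :=
  congrFun (he.2 β hβ).1 y

theorem stmt4_general {X : Type*}
    (S : Set (X → X))
    (e : X → X) (he : IsZeroElem S e) (hnil : IsNilpotentSub S e) :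
    ∀ x ∈ Set.range e, ∀ y : X, e y = x → y ≠ x →
      ∀ β ∈ S, e (β y) = x ∧ β y ≠ y := by
  rintro x - y rfl hy β hβ
  exact ⟨he.apply_apply hβ y, fun hfix => hy (hnil.apply_eq_self_of_isFixedPt hβ hfix).symm⟩

theorem stmt4 {X : Type*} [Fintype X]
    (S : Set (X → X)) (hS : IsTransSub S)
    (e : X → X) (he : IsZeroElem S e) (hnil : IsNilpotentSub S e) :
    ∀ x ∈ Set.range e, ∀ y : X, e y = x → y ≠ x →
      ∀ β ∈ S, e (β y) = x ∧ β y ≠ y :=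
  stmt4_general S e he hnil
end

section
/- Let X be a finite set with |X| ≥ 2, and let S be a nilpotent subsemigroup of T(X) whose zero element is a constant map (rank 1). Then the union of the images of all elements of S is a proper subset of X. -/
theorem stmt5 {X : Type*} [Fintype X] (hX : 2 ≤ Fintype.card X)
    (S : Set (X → X)) (hS : IsTransSub S)
    (e : X → X) (he : IsZeroElem S e) (hnil : IsNilpotentSub S e)
    (hconst : ∃ c : X, e = Function.const X c) :
    (⋃ β ∈ S, Set.range β) ⊂ Set.univ := by
  obtain ⟨c, rfl⟩ := hconst
  obtain ⟨m, hm, hprod⟩ := hnil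
  have hnontriv : Nontrivial X := Fintype.one_lt_card_iff_nontrivial.mp hX
  obtain ⟨x, hx⟩ := exists_ne c
  refine Set.ssubset_univ_iff.mpr ?_
  intro hU
  -- every point is in the range of some element of S
  have hall : ∀ y : X, ∃ β ∈ S, ∃ z, β z = y := by
    intro y
    have : y ∈ (⋃ β ∈ S, Set.range β) := hU ▸ Set.mem_univ y
    simpa [Set.mem_iUnion] using this
  have key : ∀ k : ℕ, ∃ L : List (X → X), L.length = k ∧ (∀ f ∈ L, f ∈ S) ∧
      ∃ y, L.foldr (· ∘ ·) id y = x := by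
    intro k
    induction k with
    | zero => exact ⟨[], rfl, by simp, x, rfl⟩
    | succ n ih =>
      obtain ⟨L, hlen, hmem, y, hy⟩ := ih
      obtain ⟨β, hβ, z, hz⟩ := hall y
      refine ⟨L ++ [β], by simp [hlen], ?_, z, ?_⟩
      · intro f hf
        rcases List.mem_append.mp hf with h | h
        · exact hmem f h
        · rw [List.mem_singleton.mp h]; exact hβ
      · have hfold : ∀ (M : List (X → X)) (g : X → X),
            M.foldr (· ∘ ·) g = (M.foldr (· ∘ ·) id) ∘ g := by
          intro M
          induction M with
          | nil => intro g; rfl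
          | cons a M ihM =>
            intro g
            show a ∘ (M.foldr (· ∘ ·) g) = _
            rw [ihM]; rfl
        rw [List.foldr_append, List.foldr, List.foldr, hfold]
        show (List.foldr _ id L) (β (id z)) = x
        rw [show β (id z) = y from hz, hy]
  obtain ⟨L, hlen, hmem, y, hy⟩ := key m
  rw [hprod L hlen hmem] at hy
  exact hx hy.symm
end

section
/- Let X be a finite set and S a nilpotent subsemigroup of T(X) whose zero e is a constant map. Then there exists a partition A_0, A_1, ..., A_k of X such that A_0 = im(e) and, for each j ∈ {1,...,k}, A_j is the set of all x ∈ X \ (A_0 ∪ ... ∪ A_{j-1}) satisfying xβ ∈ A_0 ∪ ... ∪ A_{j-1} for all β ∈ S. -/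
/-!
Let `D j = A_0 ∪ ⋯ ∪ A_j`, so that `D 0 = {c}` and `D (j+1)` adds the points all of whose
`S`-images lie in `D j`. A point sent to `c` by every product of `n` elements of `S` lies in
`D n`, so nilpotency with constant zero `c` gives `D m = univ`. Once two consecutive `D j`
agree the chain is constant, so before the first `k` with `D k = univ` every new layer
`A_j` is nonempty, and `A_0, …, A_k` is the required partition.
-/

section SPartition

variable {X : Type*} (S : Set (X → X)) (c : X)

/-- `layersUpTo S c j` is `A_0 ∪ ⋯ ∪ A_j` for the `S`-partition with `A_0 = {c}`. -/
def layersUpTo : ℕ → Set X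
  | 0 => {c}
  | j + 1 => layersUpTo j ∪ {x | ∀ β ∈ S, β x ∈ layersUpTo j}

/-- The layer `A_j` of the `S`-partition with `A_0 = {c}`. -/
def layer : ℕ → Set X
  | 0 => {c}
  | j + 1 => {x | x ∉ layersUpTo S c j ∧ ∀ β ∈ S, β x ∈ layersUpTo S c j}

variable {S c}

theorem layersUpTo_mono : Monotone (layersUpTo S c) :=
  monotone_nat_of_le_succ fun _ => Set.subset_union_left

theorem mem_layersUpTo_iff {x : X} {n : ℕ} :
    x ∈ layersUpTo S c n ↔ ∃ l ≤ n, x ∈ layer S c l := by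
  induction n with
  | zero => simp [layersUpTo, layer]
  | succ n ih =>
    simp only [Nat.le_succ_iff, or_and_right, exists_or, exists_eq_left, ← ih]
    show x ∈ layersUpTo S c n ∨ _ ↔ x ∈ layersUpTo S c n ∨ (x ∉ layersUpTo S c n ∧ _)
    tauto

theorem layer_subset_layersUpTo (j : ℕ) : layer S c j ⊆ layersUpTo S c j :=
  fun _ hx => mem_layersUpTo_iff.2 ⟨j, le_rfl, hx⟩

theorem pairwise_disjoint_layer : Pairwise fun i j => Disjoint (layer S c i) (layer S c j) := by
  refine (pairwise_disjoint_on _).2 fun j l hjl => ?_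
  obtain ⟨l, rfl⟩ : ∃ l', l = l' + 1 := ⟨l - 1, by omega⟩
  refine Set.disjoint_left.2 fun x hxj hxl => hxl.1 ?_
  exact layersUpTo_mono (Nat.le_of_lt_succ hjl) (layer_subset_layersUpTo j hxj)

theorem layersUpTo_eq_of_le {j n : ℕ} (hj : layersUpTo S c (j + 1) = layersUpTo S c j)
    (hjn : j ≤ n) : layersUpTo S c n = layersUpTo S c j := by
  induction n, hjn using Nat.le_induction with
  | base => rfl
  | succ n _ ih => rw [layersUpTo, ih, ← layersUpTo, hj]

theorem layer_succ_nonempty {j n : ℕ} (hj : layersUpTo S c j ≠ Set.univ)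
    (hn : layersUpTo S c n = Set.univ) : (layer S c (j + 1)).Nonempty := by
  by_contra hempty
  have hstable : layersUpTo S c (j + 1) = layersUpTo S c j := by
    refine (Set.union_subset le_rfl fun x hx => ?_).antisymm Set.subset_union_left
    by_contra hxj
    exact hempty ⟨x, hxj, hx⟩
  rcases le_total j n with hjn | hnj
  · exact hj (layersUpTo_eq_of_le hstable hjn ▸ hn)
  · exact hj (Set.univ_subset_iff.1 (hn ▸ layersUpTo_mono hnj))

theorem layer_succ_eq_setOf (j : ℕ) :
    layer S c (j + 1) = {x | (∀ l < j + 1, x ∉ layer S c l) ∧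
      ∀ β ∈ S, ∃ l < j + 1, β x ∈ layer S c l} := by
  ext x
  change x ∉ layersUpTo S c j ∧ (∀ β ∈ S, β x ∈ layersUpTo S c j) ↔ _
  simp only [mem_layersUpTo_iff, Set.mem_ofPred_eq, Nat.lt_succ_iff, not_exists, not_and]

theorem foldr_comp_apply (L : List (X → X)) (g : X → X) (x : X) :
    L.foldr (· ∘ ·) g x = L.foldr (· ∘ ·) id (g x) := by
  induction L with
  | nil => rfl
  | cons f L ih => simp only [List.foldr_cons, Function.comp_apply, ih]

theorem mem_layersUpTo_of_forall_foldr {n : ℕ} {x : X}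
    (hx : ∀ L : List (X → X), L.length = n → (∀ f ∈ L, f ∈ S) → L.foldr (· ∘ ·) id x = c) :
    x ∈ layersUpTo S c n := by
  induction n generalizing x with
  | zero => exact Set.mem_singleton_iff.2 (hx [] rfl nofun)
  | succ n ih =>
    refine Or.inr fun β hβ => ih fun L hL hLS => ?_
    have := hx (L ++ [β]) (by simp [hL]) (by simpa [or_imp, forall_and, hβ] using hLS)
    rwa [List.foldr_append, foldr_comp_apply] at this

theorem exists_layersUpTo_eq_univ (hnil : IsNilpotentSub S (Function.const X c)) :
    ∃ n, layersUpTo S c n = Set.univ := by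
  obtain ⟨m, -, hm⟩ := hnil
  exact ⟨m, Set.eq_univ_of_forall fun x => mem_layersUpTo_of_forall_foldr fun L hL hLS => by
    rw [hm L hL hLS, Function.const_apply]⟩

end SPartition

theorem stmt6_general {X : Type*}
    (S : Set (X → X))
    (e : X → X) (hnil : IsNilpotentSub S e)
    (hconst : ∃ c : X, e = Function.const X c) :
    ∃ (k : ℕ) (A : ℕ → Set X),
      (∀ j ≤ k, (A j).Nonempty) ∧
      (∀ j ≤ k, ∀ l ≤ k, j ≠ l → Disjoint (A j) (A l)) ∧
      (⋃ j ∈ Finset.range (k + 1), A j) = Set.univ ∧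
      A 0 = Set.range e ∧
      (∀ j, 1 ≤ j → j ≤ k →
        A j = {x : X | (∀ l < j, x ∉ A l) ∧ ∀ β ∈ S, ∃ l < j, β x ∈ A l}) := by
  obtain ⟨c, rfl⟩ := hconst
  have hfin := exists_layersUpTo_eq_univ hnil
  refine ⟨Nat.find hfin, layer S c, ?_, fun j _ l _ hjl => pairwise_disjoint_layer hjl, ?_,
    (@Set.range_const _ _ ⟨c⟩ c).symm, ?_⟩
  · rintro (_ | j) hj
    · exact ⟨c, rfl⟩
    · exact layer_succ_nonempty (Nat.find_min hfin (by omega)) (Nat.find_spec hfin)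
  · refine Set.eq_univ_of_forall fun x => ?_
    obtain ⟨l, hl, hx⟩ := mem_layersUpTo_iff.1 ((Nat.find_spec hfin).symm ▸ Set.mem_univ x)
    exact Set.mem_biUnion (Finset.mem_range.2 (Nat.lt_succ_of_le hl)) hx
  · rintro (_ | j) hj _
    · omega
    · exact layer_succ_eq_setOf j

theorem stmt6 {X : Type*} [Fintype X]
    (S : Set (X → X)) (hS : IsTransSub S)
    (e : X → X) (he : IsZeroElem S e) (hnil : IsNilpotentSub S e)
    (hconst : ∃ c : X, e = Function.const X c) :
    ∃ (k : ℕ) (A : ℕ → Set X),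
      (∀ j ≤ k, (A j).Nonempty) ∧
      (∀ j ≤ k, ∀ l ≤ k, j ≠ l → Disjoint (A j) (A l)) ∧
      (⋃ j ∈ Finset.range (k + 1), A j) = Set.univ ∧
      A 0 = Set.range e ∧
      (∀ j, 1 ≤ j → j ≤ k →
        A j = {x : X | (∀ l < j, x ∉ A l) ∧ ∀ β ∈ S, ∃ l < j, β x ∈ A l}) :=
  stmt6_general S e hnil hconst
end

section
/- Let X be a finite set, S a commutative nilpotent subsemigroup of T(X) whose zero is a constant map, and {A_j}_{j=0}^k the S-partition of X. Fix i ∈ {1,...,k}, set A = A_0 ∪ ... ∪ A_{i-1}, and let x ∈ A_i. If β_1, ..., β_m ∈ S agree on A, then (xβ_1)γ = (xβ_2)γ = ... = (xβ_m)γ for every γ ∈ S. -/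
theorem stmt7 {X : Type*} [Fintype X]
    (S : Set (X → X)) (hS : IsTransSub S) (hcomm : IsCommSub S)
    (e : X → X) (he : IsZeroElem S e) (hnil : IsNilpotentSub S e)
    (hconst : ∃ c : X, e = Function.const X c)
    (k : ℕ) (A : ℕ → Set X)
    (hcover : ∀ y : X, ∃ j ≤ k, y ∈ A j)
    (hA0 : A 0 = Set.range e)
    (hAj : ∀ j, 1 ≤ j → j ≤ k →
      A j = {x : X | (∀ l < j, x ∉ A l) ∧ ∀ β ∈ S, ∃ l < j, β x ∈ A l})
    (i : ℕ) (hi1 : 1 ≤ i) (hik : i ≤ k)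
    (x : X) (hx : x ∈ A i)
    (m : ℕ) (β : Fin m → (X → X)) (hβ : ∀ p, β p ∈ S)
    (hagree : ∀ p q : Fin m, ∀ a : X, (∃ l < i, a ∈ A l) → β p a = β q a) :
    ∀ γ ∈ S, ∀ p q : Fin m, γ (β p x) = γ (β q x) := by
  intro γ hγ p q
  have hxi : x ∈ {x : X | (∀ l < i, x ∉ A l) ∧ ∀ β ∈ S, ∃ l < i, β x ∈ A l} := by
    rw [← hAj i hi1 hik]; exact hx
  have hγx : ∃ l < i, γ x ∈ A l := hxi.2 γ hγ
  have h1 : β p (γ x) = γ (β p x) := congrFun (hcomm (β p) (hβ p) γ hγ) x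
  have h2 : β q (γ x) = γ (β q x) := congrFun (hcomm (β q) (hβ q) γ hγ) x
  rw [← h1, ← h2]
  exact hagree p q (γ x) hγx
end

section
/- Let X be a finite set and S a commutative nilpotent subsemigroup of T(X) whose zero is a constant map. Then there exists a null subsemigroup N of T(X) (i.e., N has a zero element z with βγ = z for all β, γ ∈ N) such that |N| = |S|. -/
/-!
Let `W = XS` be the union of the images of the elements of `S`, and `c` the value of the zero.
Redefining every `β ∈ S` to be `c` on `W` gives a null semigroup with zero the constant map `c`,
since each collapsed map sends `X` into `W ∪ {c} = W`. The collapse is injective on `S`: if `β`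
and `γ` agree off `W`, then a downward induction on `k`, starting from `k = m` where all products
equal the zero, shows `β ∘ π = γ ∘ π` for every product `π` of `k` elements of `S`; at a point of `W`
one passes to a longer product, and off `W` one commutes `π` past `β` and `γ`. The case `k = 0`
is `β = γ`.
-/

section

variable {X : Type*}

theorem IsNullSub.isTransSub {N : Set (X → X)} {z : X → X} (hN : IsNullSub N z) (hz : z ∈ N) :
    IsTransSub N := fun β hβ γ hγ => hN β hβ γ hγ ▸ hz

theorem IsNullSub.isZeroElem {N : Set (X → X)} {z : X → X} (hN : IsNullSub N z) (hz : z ∈ N) :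
    IsZeroElem N z :=
  ⟨hz, fun β hβ => ⟨hN β hβ z hz, hN z hz β hβ⟩⟩

theorem IsCommSub.comp_foldr_comp {S : Set (X → X)} (hcomm : IsCommSub S) {β : X → X}
    (hβ : β ∈ S) {L : List (X → X)} (hL : ∀ f ∈ L, f ∈ S) :
    β ∘ L.foldr (· ∘ ·) id = L.foldr (· ∘ ·) id ∘ β := by
  induction L with
  | nil => rfl
  | cons f L ih =>
    rw [List.forall_mem_cons] at hL
    rw [List.foldr_cons, ← Function.comp_assoc, hcomm β hβ f hL.1, Function.comp_assoc,
      ih hL.2, Function.comp_assoc]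

theorem IsNilpotentSub.eq_of_eqOn_compl_iUnion_range {S : Set (X → X)} {e : X → X}
    (hnil : IsNilpotentSub S e) (hcomm : IsCommSub S) (he : IsZeroElem S e) {β γ : X → X}
    (hβ : β ∈ S) (hγ : γ ∈ S) (hout : ∀ x ∉ ⋃ δ ∈ S, Set.range δ, β x = γ x) : β = γ := by
  obtain ⟨m, -, hm⟩ := hnil
  have on_products : ∀ j (L : List (X → X)), L.length + j = m → (∀ f ∈ L, f ∈ S) →
      β ∘ L.foldr (· ∘ ·) id = γ ∘ L.foldr (· ∘ ·) id := by
    intro j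
    induction j with
    | zero =>
      intro L hlen hL
      rw [hm L hlen hL, (he.2 β hβ).2, (he.2 γ hγ).2]
    | succ j ih =>
      intro L hlen hL
      funext y
      set π := L.foldr (· ∘ ·) id
      by_cases hy : y ∈ ⋃ δ ∈ S, Set.range δ
      · obtain ⟨δ, hδ, y, rfl⟩ : ∃ δ ∈ S, ∃ y', δ y' = y := by simpa using hy
        have hπδ : π (δ y) = δ (π y) := (congrFun (hcomm.comp_foldr_comp hδ hL) y).symm
        have hlonger := congrFun (ih (δ :: L) (by simp only [List.length_cons]; omega)
          (List.forall_mem_cons.2 ⟨hδ, hL⟩)) y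
        simpa only [List.foldr_cons, Function.comp_apply, hπδ] using hlonger
      · calc β (π y) = π (β y) := congrFun (hcomm.comp_foldr_comp hβ hL) y
          _ = π (γ y) := by rw [hout y hy]
          _ = γ (π y) := (congrFun (hcomm.comp_foldr_comp hγ hL) y).symm
  exact on_products m [] (Nat.zero_add m) (by simp)

open Classical in
noncomputable def collapse (W : Set X) (c : X) (β : X → X) : X → X :=
  fun x => if x ∈ W then c else β x

theorem collapse_of_notMem {W : Set X} {x : X} (c : X) (β : X → X) (hx : x ∉ W) :
    collapse W c β x = β x := if_neg hx

theorem collapse_const (W : Set X) (c : X) :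
    collapse W c (Function.const X c) = Function.const X c :=
  funext fun _ => ite_self c

theorem collapse_comp_collapse {W : Set X} {c : X} {f : X → X} (hc : c ∈ W) (hf : ∀ x, f x ∈ W)
    (g : X → X) : collapse W c g ∘ collapse W c f = Function.const X c := by
  funext x
  have hfx : collapse W c f x ∈ W := by
    unfold collapse
    split_ifs
    exacts [hc, hf x]
  exact if_pos hfx

end

theorem stmt8_general {X : Type*}
    (S : Set (X → X)) (hcomm : IsCommSub S)
    (e : X → X) (he : IsZeroElem S e) (hnil : IsNilpotentSub S e)
    (hconst : ∃ c : X, e = Function.const X c) :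
    ∃ (N : Set (X → X)) (z : X → X), IsTransSub N ∧ IsZeroElem N z ∧
      IsNullSub N z ∧ N.ncard = S.ncard := by
  obtain ⟨c, rfl⟩ := hconst
  set W := ⋃ δ ∈ S, Set.range δ
  have hmapsW : ∀ β ∈ S, ∀ x, β x ∈ W := fun β hβ x => Set.mem_biUnion hβ ⟨x, rfl⟩
  have hnull : IsNullSub (collapse W c '' S) (Function.const X c) := by
    rintro _ ⟨β, hβ, rfl⟩ _ ⟨γ, -, rfl⟩
    exact collapse_comp_collapse (hmapsW _ he.1 c) (hmapsW β hβ) γ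
  have hzN : Function.const X c ∈ collapse W c '' S := ⟨_, he.1, collapse_const W c⟩
  refine ⟨_, _, hnull.isTransSub hzN, hnull.isZeroElem hzN, hnull,
    Set.InjOn.ncard_image fun β hβ γ hγ hβγ => ?_⟩
  refine hnil.eq_of_eqOn_compl_iUnion_range hcomm he hβ hγ fun x hx => ?_
  rw [← collapse_of_notMem c β hx, ← collapse_of_notMem c γ hx, hβγ]

theorem stmt8 {X : Type*} [Fintype X]
    (S : Set (X → X)) (hS : IsTransSub S) (hcomm : IsCommSub S)
    (e : X → X) (he : IsZeroElem S e) (hnil : IsNilpotentSub S e)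
    (hconst : ∃ c : X, e = Function.const X c) :
    ∃ (N : Set (X → X)) (z : X → X), IsTransSub N ∧ IsZeroElem N z ∧
      IsNullSub N z ∧ N.ncard = S.ncard :=
  stmt8_general S hcomm e he hnil hconst
end

section
/- Let X be a finite set. The maximum cardinality of a commutative nilpotent subsemigroup of T(X) whose zero is a constant map is ξ(|X|) = max{t^(|X|−t) : 1 ≤ t ≤ |X|}. -/
/-!
Let `A` be the union of the ranges of the elements of a commutative nilpotent `S` with constant
zero `c`. An element of `S` is determined by its restriction to `Aᶜ`: if `β, β' ∈ S` agree off
`A`, then `β ∘ P = β' ∘ P` for every product `P` of elements of `S`, by downward induction on its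
length. Long products are the constant `c`, fixed by `β` and `β'`; at a point off `A`, both maps
commute past `P`; and a point of `A` is some `γ y`, where `P ∘ γ` is a longer product. Hence
`|S| ≤ |A| ^ |Aᶜ| ≤ ξ(|X|)`. Conversely, if `|A| = t` attains `ξ(|X|)` and `c ∈ A`, the maps
sending `A` to `c` and `Aᶜ` into `A` form a null semigroup of size `t ^ (|X| - t)`.
-/

open Function Set

section Products

variable {X : Type*}

lemma foldr_comp_append (L₁ L₂ : List (X → X)) :
    (L₁ ++ L₂).foldr (· ∘ ·) id = L₁.foldr (· ∘ ·) id ∘ L₂.foldr (· ∘ ·) id := by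
  induction L₁ with
  | nil => rfl
  | cons f L ih => simp only [List.cons_append, List.foldr_cons, ih, comp_assoc]

lemma IsCommSub.commute_foldr_comp {S : Set (X → X)} (hS : IsCommSub S) {β : X → X}
    (hβ : β ∈ S) {L : List (X → X)} (hL : ∀ f ∈ L, f ∈ S) :
    Function.Commute β (L.foldr (· ∘ ·) id) := by
  induction L with
  | nil => exact .id_right
  | cons f L ih =>
    have hf : Function.Commute β f := congrFun (hS β hβ f (hL f List.mem_cons_self))
    exact hf.comp_right (ih fun g hg => hL g (List.mem_cons_of_mem f hg))

lemma foldr_comp_eq_const_of_length_le {S : Set (X → X)} {c : X} {m : ℕ}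
    (hm : ∀ L : List (X → X), L.length = m → (∀ f ∈ L, f ∈ S) →
      L.foldr (· ∘ ·) id = const X c)
    {L : List (X → X)} (hL : ∀ f ∈ L, f ∈ S) (hlen : m ≤ L.length) :
    L.foldr (· ∘ ·) id = const X c := by
  rw [← List.take_append_drop m L, foldr_comp_append,
    hm _ (List.length_take_of_le hlen) fun f hf => hL f (List.mem_of_mem_take hf), const_comp]

theorem IsCommSub.eq_of_eqOn_compl_iUnion_range {S : Set (X → X)} {c : X} (hS : IsCommSub S)
    (hnil : IsNilpotentSub S (const X c)) (hfix : ∀ β ∈ S, β c = c) {β β' : X → X}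
    (hβ : β ∈ S) (hβ' : β' ∈ S) (h : EqOn β β' (⋃ γ ∈ S, range γ)ᶜ) : β = β' := by
  obtain ⟨m, -, hm⟩ := hnil
  suffices key : ∀ (d : ℕ) (L : List (X → X)), (∀ f ∈ L, f ∈ S) → m ≤ L.length + d →
      ∀ x, β (L.foldr (· ∘ ·) id x) = β' (L.foldr (· ∘ ·) id x) from
    funext (key m [] (by simp) le_add_self)
  intro d
  induction d with
  | zero =>
    intro L hL hlen x
    rw [foldr_comp_eq_const_of_length_le hm hL hlen]
    exact (hfix β hβ).trans (hfix β' hβ').symm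
  | succ d ih =>
    intro L hL hlen x
    by_cases hx : x ∈ ⋃ γ ∈ S, range γ
    · obtain ⟨γ, hγ, y, rfl⟩ : ∃ γ ∈ S, ∃ y, γ y = x := by simpa using hx
      have hLγ : ∀ f ∈ L ++ [γ], f ∈ S := by
        simpa [or_imp, forall_and] using And.intro hL hγ
      have hlong := ih (L ++ [γ]) hLγ (by simp; omega) y
      rwa [foldr_comp_append] at hlong
    · rw [hS.commute_foldr_comp hβ hL x, hS.commute_foldr_comp hβ' hL x, h hx]

end Products

section Counting

lemma pow_sub_le_xi {n t : ℕ} (ht : t ∈ Finset.Icc 1 n) : t ^ (n - t) ≤ xi n :=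
  Finset.le_sup (f := fun t => t ^ (n - t)) ht

lemma exists_pow_sub_eq_xi {n : ℕ} (hn : 0 < n) : ∃ t ∈ Finset.Icc 1 n, t ^ (n - t) = xi n :=
  (Finset.exists_mem_eq_sup _ (Finset.nonempty_Icc.2 hn) _).imp fun _ ⟨ht, h⟩ => ⟨ht, h.symm⟩

variable {X : Type*}

lemma ncard_pow_ncard_compl_le_xi [Fintype X] {A : Set X} (hA : A.Nonempty) :
    A.ncard ^ Aᶜ.ncard ≤ xi (Fintype.card X) := by
  have hcompl : Aᶜ.ncard = Fintype.card X - A.ncard := by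
    rw [ncard_compl, Nat.card_eq_fintype_card]
  rw [hcompl]
  refine pow_sub_le_xi (Finset.mem_Icc.2 ⟨(ncard_pos).2 hA, ?_⟩)
  exact (ncard_le_card A).trans_eq Nat.card_eq_fintype_card

lemma ncard_le_ncard_pow_ncard_compl [Finite X] {S : Set (X → X)} {A : Set X}
    (hrange : ∀ β ∈ S, range β ⊆ A) (hinj : ∀ β ∈ S, ∀ β' ∈ S, EqOn β β' Aᶜ → β = β') :
    S.ncard ≤ A.ncard ^ Aᶜ.ncard := by
  let restrict : S → (↥Aᶜ → A) := fun β x => ⟨β.1 x, hrange β.1 β.2 (mem_range_self _)⟩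
  have hrestrict : Injective restrict := fun β β' h =>
    Subtype.ext (hinj β.1 β.2 β'.1 β'.2 fun x hx => congrArg Subtype.val (congrFun h ⟨x, hx⟩))
  simpa only [Nat.card_fun, Nat.card_coe_set_eq] using Nat.card_le_card_of_injective _ hrestrict

end Counting

section UpperBound

variable {X : Type*} [Fintype X]

theorem ncard_le_xi_of_isCommSub {S : Set (X → X)} {c : X} (hS : IsCommSub S)
    (hzero : IsZeroElem S (const X c)) (hnil : IsNilpotentSub S (const X c)) :
    S.ncard ≤ xi (Fintype.card X) := by
  set A := ⋃ γ ∈ S, range γ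
  have hfix : ∀ β ∈ S, β c = c := fun β hβ => congrFun ((hzero.2 β hβ).2) c
  have hA : A.Nonempty := ⟨c, mem_biUnion hzero.1 (mem_range_self c)⟩
  calc S.ncard ≤ A.ncard ^ Aᶜ.ncard :=
        ncard_le_ncard_pow_ncard_compl (fun β hβ => subset_biUnion_of_mem (u := range) hβ)
          fun β hβ β' hβ' => hS.eq_of_eqOn_compl_iUnion_range hnil hfix hβ hβ'
    _ ≤ xi (Fintype.card X) := ncard_pow_ncard_compl_le_xi hA

end UpperBound

section NullSemigroups

variable {X : Type*} {S : Set (X → X)} {e : X → X}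

lemma IsNullSub.isTransSub_s9 (h : IsNullSub S e) (he : e ∈ S) : IsTransSub S :=
  fun β hβ γ hγ => h β hβ γ hγ ▸ he

lemma IsNullSub.isCommSub (h : IsNullSub S e) : IsCommSub S :=
  fun β hβ γ hγ => (h γ hγ β hβ).trans (h β hβ γ hγ).symm

lemma IsNullSub.isZeroElem_s9 (h : IsNullSub S e) (he : e ∈ S) : IsZeroElem S e :=
  ⟨he, fun β hβ => ⟨h β hβ e he, h e he β hβ⟩⟩

lemma IsNullSub.isNilpotentSub (h : IsNullSub S e) : IsNilpotentSub S e := by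
  refine ⟨2, two_pos, fun L hL hS => ?_⟩
  obtain ⟨β, γ, rfl⟩ := List.length_eq_two.1 hL
  exact h γ (hS γ (by simp)) β (hS β (by simp))

def nullSemigroupOn (A : Set X) (c : X) : Set (X → X) :=
  {β | EqOn β (const X c) A ∧ MapsTo β Aᶜ A}

variable {A : Set X} {c : X}

lemma const_mem_nullSemigroupOn (hc : c ∈ A) : const X c ∈ nullSemigroupOn A c :=
  ⟨fun _ _ => rfl, fun _ _ => hc⟩

lemma isNullSub_nullSemigroupOn (hc : c ∈ A) : IsNullSub (nullSemigroupOn A c) (const X c) := by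
  intro β hβ γ hγ
  funext x
  by_cases hx : x ∈ A
  · exact hγ.1 (hβ.1 hx ▸ hc)
  · exact hγ.1 (hβ.2 hx)

open Classical in
noncomputable def nullSemigroupOnEquiv : nullSemigroupOn A c ≃ (↥Aᶜ → A) where
  toFun β x := ⟨β.1 x, β.2.2 x.2⟩
  invFun g := ⟨fun x => if hx : x ∈ A then c else g ⟨x, hx⟩,
    fun x hx => dif_pos hx, fun x hx => by simp [dif_neg hx]⟩
  left_inv β := by
    ext x
    by_cases hx : x ∈ A
    · simp [hx, β.2.1 hx]
    · simp [hx]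
  right_inv g := by
    ext x
    simp [dif_neg x.2]

lemma ncard_nullSemigroupOn [Finite X] :
    (nullSemigroupOn A c).ncard = A.ncard ^ Aᶜ.ncard := by
  rw [← Nat.card_coe_set_eq, Nat.card_congr nullSemigroupOnEquiv, Nat.card_fun,
    Nat.card_coe_set_eq, Nat.card_coe_set_eq]

theorem exists_isNullSub_ncard_eq_xi [Fintype X] [Nonempty X] :
    ∃ (S : Set (X → X)) (c : X), IsNullSub S (const X c) ∧ const X c ∈ S ∧
      S.ncard = xi (Fintype.card X) := by
  obtain ⟨t, ht, hxi⟩ := exists_pow_sub_eq_xi (Fintype.card_pos (α := X))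
  obtain ⟨ht1, htn⟩ := Finset.mem_Icc.1 ht
  obtain ⟨A, -, hA⟩ := exists_subset_card_eq (s := (univ : Set X)) (n := t)
    (by rwa [ncard_univ, Nat.card_eq_fintype_card])
  obtain ⟨c, hc⟩ := nonempty_of_ncard_ne_zero (s := A) (by omega)
  refine ⟨nullSemigroupOn A c, c, isNullSub_nullSemigroupOn hc, const_mem_nullSemigroupOn hc, ?_⟩
  rw [ncard_nullSemigroupOn, ncard_compl, hA, Nat.card_eq_fintype_card, hxi]

end NullSemigroups

theorem stmt9 {X : Type*} [Fintype X] [Nonempty X] :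
    IsGreatest {n : ℕ | ∃ (S : Set (X → X)) (e : X → X),
        IsTransSub S ∧ IsCommSub S ∧ IsZeroElem S e ∧ IsNilpotentSub S e ∧
        (∃ c : X, e = Function.const X c) ∧ S.ncard = n}
      (xi (Fintype.card X)) := by
  constructor
  · obtain ⟨S, c, hnull, hc, hcard⟩ := exists_isNullSub_ncard_eq_xi (X := X)
    exact ⟨S, const X c, hnull.isTransSub_s9 hc, hnull.isCommSub, hnull.isZeroElem_s9 hc,
      hnull.isNilpotentSub, ⟨c, rfl⟩, hcard⟩
  · rintro _ ⟨S, _, -, hS, hzero, hnil, ⟨c, rfl⟩, rfl⟩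
    exact ncard_le_xi_of_isCommSub hS hzero hnil
end

section
/- Let X be a finite set, S a nilpotent subsemigroup of T(X) with zero e, and x ∈ im(e). Let I_x = e⁻¹(x). Then every β ∈ S maps I_x into I_x, and S_x = {β restricted to I_x : β ∈ S} is a nilpotent subsemigroup of T(I_x) whose zero is e restricted to I_x, which is the constant map with value x. -/
/-!
Since `e ∘ β = e` for every `β ∈ S`, each `β` preserves the fibres of `e`, so `S` restricts to the
fibre `I_x = e⁻¹(x)`. Restriction is compatible with composition, hence a product of `m` restricted
maps is the restriction of a product of `m` elements of `S`, which is `e`; and `e` restricted to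
`I_x` is constant with value `x` because `e (e y) = e y`.
-/

namespace IsZeroElem

variable {X : Type*} {S : Set (X → X)} {e β : X → X}

theorem apply_apply_left (he : IsZeroElem S e) (hβ : β ∈ S) (y : X) : e (β y) = e y :=
  congrFun (he.2 β hβ).1 y

theorem apply_apply_right (he : IsZeroElem S e) (hβ : β ∈ S) (y : X) : β (e y) = e y :=
  congrFun (he.2 β hβ).2 y

end IsZeroElem

def restrictSub {X : Type*} (S : Set (X → X)) (p : X → Prop) :
    Set ({y // p y} → {y // p y}) :=
  {g | ∃ β ∈ S, ∀ y, (g y : X) = β y}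

section restrictSub

variable {X : Type*} {S : Set (X → X)} {p : X → Prop}

theorem IsTransSub.restrictSub (hS : IsTransSub S) : IsTransSub (restrictSub S p) := by
  rintro g ⟨β, hβ, hgβ⟩ h ⟨γ, hγ, hhγ⟩
  exact ⟨γ ∘ β, hS β hβ γ hγ, fun y => by simp only [Function.comp_apply, hhγ, hgβ]⟩

theorem IsZeroElem.restrictSub {e : X → X} (he : IsZeroElem S e) {eI : {y // p y} → {y // p y}}
    (heI : ∀ y, (eI y : X) = e y) : IsZeroElem (restrictSub S p) eI := by
  refine ⟨⟨e, he.1, heI⟩, ?_⟩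
  rintro g ⟨β, hβ, hgβ⟩
  constructor
  · funext y
    apply Subtype.ext
    simp only [Function.comp_apply, heI, hgβ, he.apply_apply_left hβ]
  · funext y
    apply Subtype.ext
    simp only [Function.comp_apply, hgβ, heI, he.apply_apply_right hβ]

theorem exists_foldr_comp_eq_of_forall_mem_restrictSub (L : List ({y // p y} → {y // p y}))
    (hL : ∀ g ∈ L, g ∈ restrictSub S p) :
    ∃ M : List (X → X), M.length = L.length ∧ (∀ f ∈ M, f ∈ S) ∧
      ∀ y : {y // p y}, (L.foldr (· ∘ ·) id y).val = M.foldr (· ∘ ·) id (y : X) := by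
  induction L with
  | nil => exact ⟨[], rfl, by simp, fun _ => rfl⟩
  | cons g L ih =>
    obtain ⟨M, hMlen, hMS, hMfold⟩ := ih fun f hf => hL f (List.mem_cons_of_mem _ hf)
    obtain ⟨β, hβ, hgβ⟩ := hL g List.mem_cons_self
    refine ⟨β :: M, by simp [hMlen], ?_, fun y => ?_⟩
    · simpa [hβ] using hMS
    · simp only [List.foldr_cons, Function.comp_apply, hgβ, hMfold]

theorem IsNilpotentSub.restrictSub {e : X → X} (hnil : IsNilpotentSub S e)
    {eI : {y // p y} → {y // p y}} (heI : ∀ y, (eI y : X) = e y) :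
    IsNilpotentSub (restrictSub S p) eI := by
  obtain ⟨m, hm, hprod⟩ := hnil
  refine ⟨m, hm, fun L hlen hL => ?_⟩
  obtain ⟨M, hMlen, hMS, hMfold⟩ := exists_foldr_comp_eq_of_forall_mem_restrictSub L hL
  funext y
  apply Subtype.ext
  rw [hMfold, hprod M (hMlen.trans hlen) hMS, heI]

end restrictSub

theorem stmt14_general {X : Type*}
    (S : Set (X → X)) (hS : IsTransSub S)
    (e : X → X) (he : IsZeroElem S e) (hnil : IsNilpotentSub S e)
    (x : X) :
    (∀ β ∈ S, ∀ y : X, e y = x → e (β y) = x) ∧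
    (let I := {y : X // e y = x}
     let Sx : Set (I → I) := {g | ∃ β ∈ S, ∀ y : I, (g y : X) = β (y : X)}
     IsTransSub Sx ∧
     ∃ eI ∈ Sx, (∀ y : I, (eI y : X) = x) ∧ IsZeroElem Sx eI ∧
       IsNilpotentSub Sx eI) := by
  have hfibre : ∀ β ∈ S, ∀ y : X, e y = x → e (β y) = x := fun β hβ y hy =>
    (he.apply_apply_left hβ y).trans hy
  let eI : {y // e y = x} → {y // e y = x} := fun y => ⟨e y, hfibre e he.1 y y.2⟩
  have heI : ∀ y, (eI y : X) = e y := fun _ => rfl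
  have hzero : IsZeroElem (restrictSub S (e · = x)) eI := he.restrictSub heI
  exact ⟨hfibre, hS.restrictSub, eI, hzero.1, fun y => y.2, hzero, hnil.restrictSub heI⟩

theorem stmt14 {X : Type*} [Fintype X]
    (S : Set (X → X)) (hS : IsTransSub S)
    (e : X → X) (he : IsZeroElem S e) (hnil : IsNilpotentSub S e)
    (x : X) (hx : x ∈ Set.range e) :
    (∀ β ∈ S, ∀ y : X, e y = x → e (β y) = x) ∧
    (let I := {y : X // e y = x}
     let Sx : Set (I → I) := {g | ∃ β ∈ S, ∀ y : I, (g y : X) = β (y : X)}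
     IsTransSub Sx ∧
     ∃ eI ∈ Sx, (∀ y : I, (eI y : X) = x) ∧ IsZeroElem Sx eI ∧
       IsNilpotentSub Sx eI) :=
  stmt14_general S hS e he hnil x
end

section
/- Let X be a finite set and S a commutative nilpotent subsemigroup of T(X) whose zero e has rank r ≥ 2. Then |S| ≤ ξ(|X| − r + 1), where ξ(n) = max{t^(n−t) : 1 ≤ t ≤ n}. -/
/-!
Call `u, v` indistinguishable when `σ u = σ v` for all `σ ∈ S`. Nilpotency gives every point a
depth, the least `k` such that all products of `k + 1` elements of `S` send it to its `e`-image.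
At depth `0` all of `S` acts as `e`; otherwise every `σ ∈ S` strictly lowers the depth. Hence an
element of `S` is determined by its values on a transversal `T` of the classes of positive depth,
and, by commutativity, once `β, γ ∈ S` agree on the points of `T` of smaller depth than `x`, the
values `γ x` and `β x` are indistinguishable. Choosing the values point by point in order of depth
gives `|S| ≤ c ^ |T|` for any bound `c` on the class sizes. The points of `im e` lie in `r` further
classes, so there are at least `|T| + r` classes, each with at most `|X| + 1 - |T| - r` points; for
`n = |X| - r + 1` this is `|S| ≤ (n - |T|) ^ |T| ≤ ξ(n)`.
-/

open Finset

theorem List.foldr_comp_append_singleton {α : Type*} (L : List (α → α)) (σ : α → α) :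
    (L ++ [σ]).foldr (· ∘ ·) id = L.foldr (· ∘ ·) id ∘ σ := by
  induction L with
  | nil => rfl
  | cons f L ih => simp only [List.cons_append, List.foldr_cons, ih]; rfl

theorem Finset.card_fiber_add_card_le {α β : Type*} [Fintype α] [Fintype β] [DecidableEq β]
    {f : α → β} (hf : Function.Surjective f) (b : β) :
    #{a | f a = b} + Fintype.card β ≤ Fintype.card α + 1 := by
  have hrest : #(univ.erase b) ≤ #{a | ¬f a = b} := by
    refine card_le_card_of_surjOn f fun b' hb' ↦ ?_
    obtain ⟨a, rfl⟩ := hf b'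
    exact ⟨a, by simpa using (mem_erase.1 hb').1, rfl⟩
  rw [card_erase_of_mem (mem_univ b), card_univ] at hrest
  have := card_filter_add_card_filter_not (s := univ) (fun a ↦ f a = b)
  have := Fintype.card_pos_iff.2 ⟨b⟩
  rw [card_univ] at *
  omega

theorem sub_pow_le_xi {n k : ℕ} (hk : k < n) : (n - k) ^ k ≤ xi n := by
  have := le_sup (f := fun t ↦ t ^ (n - t)) (mem_Icc.2 ⟨(by omega : 1 ≤ n - k), Nat.sub_le n k⟩)
  rwa [Nat.sub_sub_self hk.le] at this

theorem card_image_restrict_insert_le {ι Y : Type*} [DecidableEq ι] [DecidableEq Y]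
    (F : Finset (ι → Y)) (W : Y → Finset Y) (c : ℕ) (hW : ∀ y, #(W y) ≤ c) (s : Finset ι)
    (a : ι) (ha : ∀ β ∈ F, ∀ γ ∈ F, (∀ j ∈ s, β j = γ j) → γ a ∈ W (β a)) :
    #(F.image (insert a s).restrict) ≤ c * #(F.image s.restrict) := by
  set forget := restrict₂ (π := fun _ ↦ Y) (subset_insert a s)
  have hforget : (F.image (insert a s).restrict).image forget = F.image s.restrict := by
    rw [image_image, restrict₂_comp_restrict]
  rw [← hforget]
  refine card_le_mul_card_image _ c fun p hp ↦ ?_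
  obtain ⟨β, hβ, rfl⟩ : ∃ β ∈ F, s.restrict β = p := by simpa [hforget] using hp
  refine (card_le_card_of_injOn (fun φ ↦ φ ⟨a, mem_insert_self a s⟩) (t := W (β a))
    ?_ ?_).trans (hW _)
  · intro φ hφ
    obtain ⟨⟨γ, hγ, rfl⟩, hγβ⟩ :
        (∃ γ ∈ F, (insert a s).restrict γ = φ) ∧ forget φ = s.restrict β := by
      simpa using hφ
    exact ha β hβ γ hγ fun j hj ↦ (congrFun hγβ ⟨j, hj⟩).symm
  · intro φ hφ φ' hφ' hval
    have hagree : forget φ = forget φ' := by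
      simp only [coe_filter, Set.mem_ofPred_eq] at hφ hφ'
      rw [hφ.2, hφ'.2]
    funext ⟨j, hj⟩
    rcases mem_insert.1 hj with rfl | hj
    · exact hval
    · exact congrFun hagree ⟨j, hj⟩

theorem card_image_restrict_le_pow {ι Y : Type*} [DecidableEq ι] [DecidableEq Y]
    (F : Finset (ι → Y)) (ρ : ι → ℕ) (W : Y → Finset Y) (c : ℕ) (hW : ∀ y, #(W y) ≤ c)
    (T : Finset ι)
    (hT : ∀ i ∈ T, ∀ β ∈ F, ∀ γ ∈ F, (∀ j ∈ T, ρ j < ρ i → β j = γ j) → γ i ∈ W (β i)) :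
    #(F.image T.restrict) ≤ c ^ #T := by
  induction T using Finset.induction_on_max_value ρ with
  | empty =>
    simpa using Finset.card_le_one_of_subsingleton (F.image (∅ : Finset ι).restrict)
  | insert a s ha hmax ih =>
    have hs : ∀ i ∈ s, ∀ β ∈ F, ∀ γ ∈ F, (∀ j ∈ s, ρ j < ρ i → β j = γ j) →
        γ i ∈ W (β i) := by
      refine fun i hi β hβ γ hγ h ↦ hT i (mem_insert_of_mem hi) β hβ γ hγ fun j hj hji ↦ ?_
      rcases mem_insert.1 hj with rfl | hj
      · exact absurd (hmax i hi) hji.not_ge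
      · exact h j hj hji
    have hstep := card_image_restrict_insert_le F W c hW s a fun β hβ γ hγ h ↦
      hT a (mem_insert_self a s) β hβ γ hγ fun j hj _ ↦
        h j ((mem_insert.1 hj).resolve_left (by rintro rfl; omega))
    calc #(F.image (insert a s).restrict) ≤ c * #(F.image s.restrict) := hstep
      _ ≤ c * c ^ #s := Nat.mul_le_mul_left c (ih hs)
      _ = c ^ #(insert a s) := by rw [card_insert_of_notMem ha, pow_succ']

namespace TransSub

variable {X : Type*} {S : Set (X → X)} {e : X → X}

variable (S) in
def commonKer : Setoid X where
  r u v := ∀ σ ∈ S, σ u = σ v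
  iseqv := ⟨fun _ _ _ ↦ rfl, fun h σ hσ ↦ (h σ hσ).symm,
    fun h₁ h₂ σ hσ ↦ (h₁ σ hσ).trans (h₂ σ hσ)⟩

variable (S e) in
def KilledBy (k : ℕ) (u : X) : Prop :=
  ∀ L : List (X → X), L.length = k → (∀ f ∈ L, f ∈ S) → L.foldr (· ∘ ·) id u = e u

variable (S e) in
noncomputable def depth (u : X) : ℕ := sInf {k | KilledBy S e (k + 1) u}

theorem killedBy_one_iff {u : X} : KilledBy S e 1 u ↔ ∀ σ ∈ S, σ u = e u := by
  refine ⟨fun h σ hσ ↦ h [σ] rfl (by simpa using hσ), ?_⟩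
  intro h L hL hLS
  obtain ⟨σ, rfl⟩ := List.length_eq_one_iff.1 hL
  simpa using h σ (hLS σ (by simp))

theorem killedBy_depth_succ (hnil : IsNilpotentSub S e) (u : X) :
    KilledBy S e (depth S e u + 1) u := by
  obtain ⟨m, hm, hprod⟩ := hnil
  refine Nat.sInf_mem (s := {k | KilledBy S e (k + 1) u}) ⟨m - 1, fun L hL hLS ↦ ?_⟩
  rw [hprod L (by omega) hLS]

theorem depth_eq_zero_iff (hnil : IsNilpotentSub S e) {u : X} :
    depth S e u = 0 ↔ ∀ σ ∈ S, σ u = e u := by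
  refine ⟨fun h ↦ killedBy_one_iff.1 ?_, fun h ↦ ?_⟩
  · simpa [h] using killedBy_depth_succ hnil u
  · exact Nat.sInf_eq_zero.2 (Or.inl (killedBy_one_iff.2 h))

theorem killedBy_succ_congr (heS : e ∈ S) {u v : X} (huv : commonKer S u v) (k : ℕ) :
    KilledBy S e (k + 1) u ↔ KilledBy S e (k + 1) v := by
  suffices ∀ u v, commonKer S u v → KilledBy S e (k + 1) u → KilledBy S e (k + 1) v from
    ⟨this u v huv, this v u ((commonKer S).symm' huv)⟩
  intro u v huv hu L hL hLS
  obtain ⟨L, σ, rfl⟩ := L.eq_nil_or_concat'.resolve_left (by rintro rfl; simp at hL)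
  have hσ : σ ∈ S := hLS σ (by simp)
  have := hu (L ++ [σ]) hL hLS
  simp only [List.foldr_comp_append_singleton, Function.comp_apply] at this ⊢
  rw [← huv σ hσ, this, huv e heS]

theorem depth_congr (heS : e ∈ S) {u v : X} (huv : commonKer S u v) :
    depth S e u = depth S e v := by
  simp only [depth, killedBy_succ_congr heS huv]

theorem killedBy_apply (hzero : ∀ σ ∈ S, e ∘ σ = e) {σ : X → X} (hσ : σ ∈ S) {k : ℕ} {u : X}
    (hu : KilledBy S e (k + 1) u) : KilledBy S e k (σ u) := by
  intro L hL hLS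
  have := hu (L ++ [σ]) (by simp [hL]) (by simpa [or_imp, forall_and] using ⟨hLS, hσ⟩)
  simp only [List.foldr_comp_append_singleton, Function.comp_apply] at this
  rw [this, ← Function.comp_apply (f := e), hzero σ hσ]

theorem depth_apply_lt (he : IsZeroElem S e) (hnil : IsNilpotentSub S e) {σ : X → X}
    (hσ : σ ∈ S) {u : X} (hu : depth S e u ≠ 0) : depth S e (σ u) < depth S e u := by
  have := killedBy_apply (fun τ hτ ↦ (he.2 τ hτ).1) hσ (killedBy_depth_succ hnil u)
  rw [← Nat.sub_add_cancel (Nat.one_le_iff_ne_zero.2 hu)] at this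
  have : depth S e (σ u) ≤ depth S e u - 1 := Nat.sInf_le this
  omega

theorem depth_apply_eq_zero (he : IsZeroElem S e) (hnil : IsNilpotentSub S e) (x : X) :
    depth S e (e x) = 0 :=
  (depth_eq_zero_iff hnil).2 fun σ hσ ↦
    congrFun ((he.2 σ hσ).2.trans (he.2 e he.1).2.symm) x

theorem eq_of_eqOn_transversal (hnil : IsNilpotentSub S e) {T : Finset X}
    (hT : ∀ x, depth S e x ≠ 0 → ∃ y ∈ T, commonKer S y x)
    {β γ : X → X} (hβ : β ∈ S) (hγ : γ ∈ S) (h : ∀ y ∈ T, β y = γ y) : β = γ := by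
  funext x
  by_cases hx : depth S e x = 0
  · rw [(depth_eq_zero_iff hnil).1 hx β hβ, (depth_eq_zero_iff hnil).1 hx γ hγ]
  · obtain ⟨y, hyT, hy⟩ := hT x hx
    rw [← hy β hβ, ← hy γ hγ, h y hyT]

theorem commonKer_apply_of_eqOn_lt (he : IsZeroElem S e) (hnil : IsNilpotentSub S e)
    (hcomm : IsCommSub S) {T : Finset X}
    (hT : ∀ x, depth S e x ≠ 0 → ∃ y ∈ T, commonKer S y x)
    {β γ : X → X} (hβ : β ∈ S) (hγ : γ ∈ S) {x : X}
    (h : ∀ y ∈ T, depth S e y < depth S e x → β y = γ y) : commonKer S (γ x) (β x) := by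
  by_cases hx : depth S e x = 0
  · rw [(depth_eq_zero_iff hnil).1 hx β hβ, (depth_eq_zero_iff hnil).1 hx γ hγ]
  intro σ hσ
  change (σ ∘ γ) x = (σ ∘ β) x
  rw [hcomm σ hσ γ hγ, hcomm σ hσ β hβ, Function.comp_apply, Function.comp_apply]
  by_cases hσx : depth S e (σ x) = 0
  · rw [(depth_eq_zero_iff hnil).1 hσx β hβ, (depth_eq_zero_iff hnil).1 hσx γ hγ]
  obtain ⟨y, hyT, hy⟩ := hT _ hσx
  have hlt : depth S e y < depth S e x :=
    depth_congr he.1 hy ▸ depth_apply_lt he hnil hσ hx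
  rw [← hy β hβ, ← hy γ hγ, h y hyT hlt]

theorem exists_transversal (heS : e ∈ S) [Finite X] :
    ∃ T : Finset X, (∀ x, depth S e x ≠ 0 → ∃ y ∈ T, commonKer S y x) ∧
      (∀ y ∈ T, depth S e y ≠ 0) ∧ (∀ y ∈ T, ∀ y' ∈ T, commonKer S y y' → y = y') := by
  classical
  have := Fintype.ofFinite X
  let rep : X → X := fun x ↦ (Quotient.mk (commonKer S) x).out
  have hrep : ∀ x, commonKer S (rep x) x := fun x ↦ Quotient.mk_out (s := commonKer S) x
  refine ⟨(univ.filter fun x ↦ depth S e x ≠ 0).image rep, fun x hx ↦ ⟨rep x, ?_, hrep x⟩, ?_, ?_⟩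
  · exact mem_image_of_mem rep (by simpa using hx)
  · simp only [mem_image, mem_filter, mem_univ, true_and]
    rintro _ ⟨x, hx, rfl⟩
    rwa [depth_congr heS (hrep x)]
  · simp only [mem_image, mem_filter, mem_univ, true_and]
    rintro _ ⟨x, -, rfl⟩ _ ⟨x', -, rfl⟩ h
    exact congrArg Quotient.out (Quotient.sound
      ((commonKer S).trans' ((commonKer S).symm' (hrep x))
      ((commonKer S).trans' h (hrep x'))))

theorem card_add_ncard_range_le (he : IsZeroElem S e) (hnil : IsNilpotentSub S e) [Finite X]
    {T : Finset X} (hT₀ : ∀ y ∈ T, depth S e y ≠ 0)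
    (hT : ∀ y ∈ T, ∀ y' ∈ T, commonKer S y y' → y = y') :
    #T + (Set.range e).ncard ≤ Nat.card (Quotient (commonKer S)) := by
  classical
  have := Fintype.ofFinite X
  have hdisj : Disjoint T (univ.image e) := by
    refine disjoint_left.2 fun y hyT hye ↦ hT₀ y hyT ?_
    obtain ⟨x, -, rfl⟩ := mem_image.1 hye
    exact depth_apply_eq_zero he hnil x
  have hinj : Set.InjOn (Quotient.mk (commonKer S)) ↑(T ∪ univ.image e) := by
    intro u hu v hv huv
    replace huv : commonKer S u v := Quotient.exact huv
    have hdepth := depth_congr he.1 huv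
    simp only [coe_union, coe_image, coe_univ, Set.image_univ, Set.mem_union, mem_coe,
      Set.mem_range] at hu hv
    rcases hu with hu | ⟨a, rfl⟩ <;> rcases hv with hv | ⟨b, rfl⟩
    · exact hT u hu v hv huv
    · exact absurd (hdepth.trans (depth_apply_eq_zero he hnil b)) (hT₀ _ hu)
    · exact absurd (hdepth.symm.trans (depth_apply_eq_zero he hnil a)) (hT₀ _ hv)
    · simpa only [← Function.comp_apply (f := e), (he.2 e he.1).2] using huv e he.1
  have hrange : (Set.range e).ncard = #(univ.image e) := by
    rw [← Set.ncard_coe_finset, coe_image, coe_univ, Set.image_univ]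
  rw [hrange, ← card_union_of_disjoint hdisj, Nat.card_eq_fintype_card, ← card_univ]
  exact card_le_card_of_injOn _ (fun _ _ ↦ mem_coe.2 (mem_univ _)) hinj

theorem ncard_le_pow (he : IsZeroElem S e) (hnil : IsNilpotentSub S e) (hcomm : IsCommSub S)
    [Fintype X] {T : Finset X} (hT : ∀ x, depth S e x ≠ 0 → ∃ y ∈ T, commonKer S y x) :
    S.ncard ≤ (Fintype.card X + 1 - Nat.card (Quotient (commonKer S))) ^ #T := by
  classical
  have hclass : ∀ y, #{v | commonKer S v y} ≤
      Fintype.card X + 1 - Nat.card (Quotient (commonKer S)) := by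
    intro y
    have := card_fiber_add_card_le Quotient.mk_surjective (Quotient.mk (commonKer S) y)
    simp only [Quotient.eq] at this
    rw [Nat.card_eq_fintype_card]
    omega
  have hinj : Set.InjOn T.restrict (S.toFinset : Set (X → X)) := by
    intro β hβ γ hγ h
    simp only [Set.coe_toFinset] at hβ hγ
    exact eq_of_eqOn_transversal hnil hT hβ hγ fun y hy ↦ congrFun h ⟨y, hy⟩
  rw [Set.ncard_eq_toFinset_card', ← card_image_of_injOn hinj]
  refine card_image_restrict_le_pow _ (depth S e) _ _ hclass T fun x _ β hβ γ hγ h ↦ ?_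
  simp only [Set.mem_toFinset] at hβ hγ
  simpa using commonKer_apply_of_eqOn_lt he hnil hcomm hT hβ hγ h

end TransSub

open TransSub in
theorem stmt17_general {X : Type*} [Fintype X]
    (S : Set (X → X)) (hcomm : IsCommSub S)
    (e : X → X) (he : IsZeroElem S e) (hnil : IsNilpotentSub S e)
    (r : ℕ) (hr : (Set.range e).ncard = r) :
    S.ncard ≤ xi (Fintype.card X - r + 1) := by
  obtain ⟨T, hcover, hdepth, hinj⟩ := exists_transversal (S := S) he.1
  have hT : #T + r ≤ Nat.card (Quotient (commonKer S)) :=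
    hr ▸ card_add_ncard_range_le he hnil hdepth hinj
  have hQ : Nat.card (Quotient (commonKer S)) ≤ Fintype.card X :=
    Nat.card_eq_fintype_card (α := X) ▸ Nat.card_le_card_of_surjective _ Quotient.mk_surjective
  calc S.ncard ≤ (Fintype.card X + 1 - Nat.card (Quotient (commonKer S))) ^ #T :=
        ncard_le_pow he hnil hcomm hcover
    _ ≤ (Fintype.card X - r + 1 - #T) ^ #T := Nat.pow_le_pow_left (by omega) _
    _ ≤ xi (Fintype.card X - r + 1) := sub_pow_le_xi (by omega)

theorem stmt17 {X : Type*} [Fintype X]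
    (S : Set (X → X)) (hS : IsTransSub S) (hcomm : IsCommSub S)
    (e : X → X) (he : IsZeroElem S e) (hnil : IsNilpotentSub S e)
    (r : ℕ) (hr : (Set.range e).ncard = r) (hr2 : 2 ≤ r) :
    S.ncard ≤ xi (Fintype.card X - r + 1) :=
  stmt17_general S hcomm e he hnil r hr
end

section
/- Let X be a finite set and S a nilpotent subsemigroup of T(X) whose zero e is the constant map with value x. Then there is no sequence x_1, x_2, ..., x_{m+1} of elements of X \ {x} and β_1, ..., β_m ∈ S with x_1 = x_{m+1} and x_j = x_{j+1}β_j for all j ∈ {1,...,m} with m ≥ 1; i.e., the directed graph on X \ {x} with an edge from z to y whenever zβ = y for some β ∈ S is acyclic. -/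
theorem stmt19 {X : Type*} [Fintype X]
    (S : Set (X → X)) (hS : IsTransSub S)
    (e : X → X) (he : IsZeroElem S e) (hnil : IsNilpotentSub S e)
    (x : X) (hconst : e = Function.const X x) :
    ∀ m : ℕ, 1 ≤ m → ∀ (a : ℕ → X) (b : ℕ → (X → X)),
      (∀ j ≤ m, a j ≠ x) → (∀ j < m, b j ∈ S) → a 0 = a m →
      ¬ (∀ j < m, a j = b j (a (j + 1))) := by
  intro m hm a b ha hb hcyc hstep
  obtain ⟨N, hN, hNil⟩ := hnil
  set A : ℕ → X := fun j => a (j % m) with hA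
  set B : ℕ → (X → X) := fun j => b (j % m) with hB
  have hmpos : 0 < m := hm
  have hBS : ∀ j, B j ∈ S := fun j => hb _ (Nat.mod_lt _ hmpos)
  have hstep' : ∀ j, A j = B j (A (j + 1)) := by
    intro j
    have hjm : j % m < m := Nat.mod_lt _ hmpos
    have hj1 : (j + 1) % m = (j % m + 1) % m := (Nat.mod_add_mod j m 1).symm
    by_cases h : j % m + 1 = m
    · have h1 : (j + 1) % m = 0 := by rw [hj1, h, Nat.mod_self]
      simp only [hA, hB, h1]
      have := hstep (j % m) hjm
      rw [this, h, ← hcyc]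
    · have hlt : j % m + 1 < m := lt_of_le_of_ne (Nat.succ_le_of_lt hjm) h
      have h1 : (j + 1) % m = j % m + 1 := by rw [hj1, Nat.mod_eq_of_lt hlt]
      simp only [hA, hB, h1]
      exact hstep (j % m) hjm
  have key : ∀ k s, A s = ((List.range k).map (fun i => B (s + i))).foldr (· ∘ ·) id (A (s + k)) := by
    intro k
    induction k with
    | zero => intro s; simp
    | succ k ih =>
      intro s
      have hl : (List.range (k + 1)).map (fun i => B (s + i)) =
          B s :: (List.range k).map (fun i => B ((s + 1) + i)) := by
        rw [List.range_succ_eq_map]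
        simp [Function.comp, Nat.add_assoc, Nat.add_comm 1]
      rw [hl]
      simp only [List.foldr_cons, Function.comp_apply]
      have := ih (s + 1)
      have harith : s + 1 + k = s + (k + 1) := by omega
      rw [harith] at this
      rw [hstep' s, this]
  have h0 := key N 0
  simp only [Nat.zero_add, Nat.zero_add] at h0
  have hL : ((List.range N).map (fun i => B i)).foldr (· ∘ ·) id = e := by
    apply hNil
    · simp
    · intro f hf
      simp only [List.mem_map] at hf
      obtain ⟨i, _, rfl⟩ := hf
      exact hBS _
  rw [hL, hconst] at h0
  exact ha 0 (Nat.zero_le m) h0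
end
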